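/- arXiv:2407.18484 — 2 statements merged into one kernel-verified Lean document; each statement's English description precedes it below -/
import Mathlib

section
/- Let E, A ∈ ℝ^{n×n} and suppose there exists a matrix M such that EᵀM is symmetric positive definite and AᵀM + MᵀA is negative definite. Then every finite generalized eigenvalue λ of the pencil sE − A (i.e., every λ ∈ ℂ with det(λE − A) = 0 and an eigenvector v with Ev ≠ 0) satisfies Re(λ) < 0. -/
/-!
Put `c = (E v)ᴴ M v = vᴴ (EᵀM) v`. Positive definiteness of `EᵀM`, read over `ℂ`, makes `c` a
positive real number. Substituting `A v = λ E v` turns the Hermitian form of `AᵀM + MᵀA` at `v`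
into `conj λ · c + λ · conj c = 2 Re(λ) c`, which is negative by hypothesis; hence `Re λ < 0`.
-/

open Matrix
open scoped ComplexOrder

namespace Matrix

variable {l m n R : Type*} [Fintype l] [Fintype m] [Fintype n]

theorem dotProduct_conjTranspose_mul_mulVec [NonUnitalSemiring R] [StarRing R]
    (A B : Matrix m n R) (v : n → R) :
    star v ⬝ᵥ (Aᴴ * B) *ᵥ v = star (A *ᵥ v) ⬝ᵥ B *ᵥ v := by
  rw [← mulVec_mulVec, dotProduct_mulVec, star_mulVec]

theorem dotProduct_lyapunov_mulVec_of_mulVec_eq_smul [CommSemiring R] [StarRing R]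
    {A E : Matrix n n R} (M : Matrix n n R) {μ : R} {v : n → R}
    (h : A *ᵥ v = μ • E *ᵥ v) :
    star v ⬝ᵥ (Aᴴ * M + Mᴴ * A) *ᵥ v =
      star μ * (star (E *ᵥ v) ⬝ᵥ M *ᵥ v) + μ * star (star (E *ᵥ v) ⬝ᵥ M *ᵥ v) := by
  rw [add_mulVec, dotProduct_add, dotProduct_conjTranspose_mul_mulVec,
    dotProduct_conjTranspose_mul_mulVec, h, star_smul, smul_dotProduct, dotProduct_smul,
    ← star_dotProduct, smul_eq_mul, smul_eq_mul]

theorem re_dotProduct_map_ofReal_mulVec (P : Matrix n n ℝ) (x : n → ℂ) :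
    (star x ⬝ᵥ P.map Complex.ofReal *ᵥ x).re
      = (fun i ↦ (x i).re) ⬝ᵥ P *ᵥ (fun i ↦ (x i).re)
        + (fun i ↦ (x i).im) ⬝ᵥ P *ᵥ (fun i ↦ (x i).im) := by
  simp only [dotProduct, mulVec, map_apply, Pi.star_apply, Complex.re_sum, Finset.mul_sum,
    ← Finset.sum_add_distrib]
  refine Finset.sum_congr rfl fun i _ ↦ Finset.sum_congr rfl fun j _ ↦ ?_
  simp only [Complex.mul_re, Complex.mul_im, Complex.star_def, Complex.conj_re, Complex.conj_im,
    Complex.ofReal_re, Complex.ofReal_im]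
  ring

theorem im_dotProduct_map_ofReal_mulVec (P : Matrix n n ℝ) (x : n → ℂ) :
    (star x ⬝ᵥ P.map Complex.ofReal *ᵥ x).im
      = (fun i ↦ (x i).re) ⬝ᵥ P *ᵥ (fun i ↦ (x i).im)
        - (fun i ↦ (x i).im) ⬝ᵥ P *ᵥ (fun i ↦ (x i).re) := by
  simp only [dotProduct, mulVec, map_apply, Pi.star_apply, Complex.im_sum, Finset.mul_sum,
    ← Finset.sum_sub_distrib]
  refine Finset.sum_congr rfl fun i _ ↦ Finset.sum_congr rfl fun j _ ↦ ?_
  simp only [Complex.mul_re, Complex.mul_im, Complex.star_def, Complex.conj_re, Complex.conj_im,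
    Complex.ofReal_re, Complex.ofReal_im]
  ring

theorem PosDef.map_ofReal {P : Matrix n n ℝ} (hP : P.PosDef) : (P.map Complex.ofReal).PosDef := by
  refine .of_dotProduct_mulVec_pos (hP.isHermitian.map _ fun _ ↦ (Complex.conj_ofReal _).symm)
    fun x hx ↦ Complex.lt_def.2 ⟨?_, ?_⟩
  · have hpos {y : n → ℝ} (hy : y ≠ 0) : 0 < y ⬝ᵥ P *ᵥ y := hP.dotProduct_mulVec_pos hy
    have hnonneg (y : n → ℝ) : 0 ≤ y ⬝ᵥ P *ᵥ y :=
      hP.posSemidef.dotProduct_mulVec_nonneg y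
    have hre : (fun i ↦ (x i).re) ≠ 0 ∨ (fun i ↦ (x i).im) ≠ 0 := by
      by_contra! h
      exact hx (funext fun i ↦ Complex.ext (congrFun h.1 i) (congrFun h.2 i))
    rw [re_dotProduct_map_ofReal_mulVec, Complex.zero_re]
    rcases hre with h | h
    · linarith [hpos h, hnonneg fun i ↦ (x i).im]
    · linarith [hpos h, hnonneg fun i ↦ (x i).re]
  · rw [im_dotProduct_map_ofReal_mulVec, Complex.zero_im, dotProduct_mulVec, ← mulVec_transpose,
      ← conjTranspose_eq_transpose_of_trivial, hP.isHermitian.eq, dotProduct_comm, sub_self]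

omit [Fintype m] [Fintype n] in
theorem map_ofReal_transpose (B : Matrix m n ℝ) :
    Bᵀ.map Complex.ofReal = (B.map Complex.ofReal)ᴴ := by
  rw [← conjTranspose_eq_transpose_of_trivial,
    conjTranspose_map _ fun _ ↦ (Complex.conj_ofReal _).symm]

omit [Fintype m] [Fintype n] in
theorem map_ofReal_transpose_mul (B : Matrix l m ℝ) (C : Matrix l n ℝ) :
    (Bᵀ * C).map Complex.ofReal = (B.map Complex.ofReal)ᴴ * C.map Complex.ofReal := by
  rw [← map_ofReal_transpose]
  exact Matrix.map_mul (f := Complex.ofRealHom)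

end Matrix

theorem lyapunov_descriptor_stability_general
    (n : ℕ) (E A M : Matrix (Fin n) (Fin n) ℝ)
    (hpos : (Eᵀ * M).PosDef)
    (hneg : (-(Aᵀ * M + Mᵀ * A)).PosDef)
    (lam : ℂ) (v : Fin n → ℂ) (hv : v ≠ 0)
    (heig : (A.map Complex.ofReal).mulVec v = lam • (E.map Complex.ofReal).mulVec v) :
    lam.re < 0 := by
  set c := star (E.map Complex.ofReal *ᵥ v) ⬝ᵥ M.map Complex.ofReal *ᵥ v
  have hc : 0 < c := by
    have := hpos.map_ofReal.dotProduct_mulVec_pos hv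
    rwa [map_ofReal_transpose_mul, dotProduct_conjTranspose_mul_mulVec] at this
  have hq : 0 < -(star lam * c + lam * star c) := by
    have := hneg.map_ofReal.dotProduct_mulVec_pos hv
    rwa [Matrix.map_neg _ Complex.ofReal_neg, Matrix.map_add _ Complex.ofReal_add,
      map_ofReal_transpose_mul, map_ofReal_transpose_mul, neg_mulVec, dotProduct_neg,
      dotProduct_lyapunov_mulVec_of_mulVec_eq_smul _ heig] at this
  obtain ⟨hc_re, hc_im⟩ := Complex.pos_iff.1 hc
  have hre : (star lam * c + lam * star c).re = 2 * lam.re * c.re := by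
    simp only [Complex.add_re, Complex.mul_re, Complex.star_def, Complex.conj_re, Complex.conj_im,
      ← hc_im]
    ring
  have := (Complex.pos_iff.1 hq).1
  rw [Complex.neg_re, hre] at this
  nlinarith

/-- Lyapunov-type stability condition for descriptor systems: if EᵀM is
symmetric positive definite and AᵀM + MᵀA is negative definite, then every
finite generalized eigenvalue λ of the pencil sE − A satisfies Re(λ) < 0. -/
theorem lyapunov_descriptor_stability
    (n : ℕ) (E A M : Matrix (Fin n) (Fin n) ℝ)
    (hsym : (Eᵀ * M).IsSymm) (hpos : (Eᵀ * M).PosDef)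
    (hneg : (-(Aᵀ * M + Mᵀ * A)).PosDef)
    (lam : ℂ) (v : Fin n → ℂ) (hv : v ≠ 0)
    (heig : (A.map Complex.ofReal).mulVec v = lam • (E.map Complex.ofReal).mulVec v)
    (hEv : (E.map Complex.ofReal).mulVec v ≠ 0) :
    lam.re < 0 :=
  lyapunov_descriptor_stability_general n E A M hpos hneg lam v hv heig
end

section
/- Let J be the (m+n+2)×(m+n+2) block matrix of the linearized continuous market model with energy imbalance: J = [[0, 0, 0, α𝟙_m],[0, 0, 0, −β𝟙_n],[𝟙_mᵀ, −𝟙_nᵀ, 0, 0],[0, 0, −k, −h]], where α = diag(α₁,...,α_m), β = diag(β₁,...,β_n). Then the characteristic polynomial of J is λ^{m+n−1}·(λ³ + hλ² + 0·λ + k·(Σᵢαᵢ + Σⱼβⱼ)) = λ^{m+n−1}(λ³ + hλ² + k(Σᵢαᵢ + Σⱼβⱼ)); in particular 0 is an eigenvalue of multiplicity at least m+n−1. -/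
open Polynomial

/-- The Jacobian of the linearized continuous market model with energy
imbalance: rows 0..m-1 are producers, rows m..m+n-1 are consumers, row m+n is
the imbalance E, row m+n+1 is the price λ. -/
noncomputable def marketJacobian (m n : ℕ) (α : Fin m → ℝ) (β : Fin n → ℝ)
    (k h : ℝ) : Matrix (Fin (m + n + 2)) (Fin (m + n + 2)) ℝ :=
  Matrix.of fun i j =>
    if hi : (i : ℕ) < m then
      if (j : ℕ) = m + n + 1 then α ⟨(i : ℕ), hi⟩ else 0
    else if hi2 : (i : ℕ) < m + n then
      if (j : ℕ) = m + n + 1 then -β ⟨(i : ℕ) - m, by omega⟩ else 0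
    else if (i : ℕ) = m + n then
      if (j : ℕ) < m then 1 else if (j : ℕ) < m + n then -1 else 0
    else
      if (j : ℕ) = m + n then -k else if (j : ℕ) = m + n + 1 then -h else 0

open Matrix

section Aux

variable {ι κ : Type*} [Fintype ι] [DecidableEq ι] [Fintype κ] [DecidableEq κ]

lemma aux_det_scalarX : ((Matrix.scalar ι (X : ℝ[X])) : Matrix ι ι ℝ[X]).det
    = X ^ Fintype.card ι := by
  rw [scalar_apply, det_diagonal, Finset.prod_const, Finset.card_univ]

lemma aux_charpoly_zero : (0 : Matrix ι ι ℝ).charpoly = X ^ Fintype.card ι := by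
  have : charmatrix (0 : Matrix ι ι ℝ) = Matrix.scalar ι (X : ℝ[X]) := by
    simp [charmatrix]
  rw [Matrix.charpoly, this, aux_det_scalarX]

lemma aux_charpoly_mul_comm (A B : Matrix ι ι ℝ) :
    (A * B).charpoly = (B * A).charpoly := by
  classical
  have hx : (Matrix.scalar ι (X : ℝ[X])) = Matrix.diagonal (fun _ => (X : ℝ[X])) :=
    scalar_apply X
  set x : Matrix ι ι ℝ[X] := Matrix.scalar ι (X : ℝ[X]) with hxdef
  have hcomm : ∀ M : Matrix ι ι ℝ[X], x * M = M * x := fun M =>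
    (scalar_commute (X : ℝ[X]) (fun r' => Commute.all _ _) M).eq
  set M1 : Matrix (ι ⊕ ι) (ι ⊕ ι) ℝ[X] :=
    fromBlocks x (A.map C) (B.map C) 1 with hM1
  set U : Matrix (ι ⊕ ι) (ι ⊕ ι) ℝ[X] :=
    fromBlocks 1 0 (-(B.map C)) x with hU
  have e11 : x * 1 + A.map C * (-(B.map C)) = charmatrix (A * B) := by
    simp [hxdef, charmatrix, Matrix.map_mul, mul_neg, sub_eq_add_neg]
  have e21 : B.map C * 1 + 1 * (-(B.map C)) = 0 := by simp
  have h1 : M1 * U = fromBlocks (charmatrix (A * B)) (x * 0 + A.map C * x) 0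
      (B.map C * 0 + 1 * x) := by
    rw [hM1, hU, fromBlocks_multiply, e11, e21]
  have f21 : (-(B.map C)) * x + x * (B.map C) = 0 := by
    rw [neg_mul, hcomm (B.map C)]; exact neg_add_cancel _
  have f22 : (-(B.map C)) * (A.map C) + x * 1 = charmatrix (B * A) := by
    simp [hxdef, charmatrix, Matrix.map_mul, mul_neg, sub_eq_add_neg, neg_mul]
    exact add_comm _ _
  have h2 : U * M1 = fromBlocks (1 * x + 0 * (B.map C)) (1 * (A.map C) + 0 * 1) 0
      (charmatrix (B * A)) := by
    rw [hM1, hU, fromBlocks_multiply, f21, f22]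
  have hdet : (M1 * U).det = (U * M1).det := by
    rw [det_mul, det_mul, mul_comm]
  rw [h1, h2, det_fromBlocks_zero₂₁, det_fromBlocks_zero₂₁] at hdet
  have hXn : (x.det : ℝ[X]) ≠ 0 := by
    rw [hxdef, aux_det_scalarX]; exact pow_ne_zero _ X_ne_zero
  simp only [Matrix.mul_zero, Matrix.one_mul, Matrix.zero_mul, zero_add, add_zero] at hdet
  rw [mul_comm] at hdet
  rw [Matrix.charpoly, Matrix.charpoly]
  exact mul_left_cancel₀ hXn hdet

lemma aux_charpoly_rect (B : Matrix ι (Fin 3) ℝ) (C : Matrix (Fin 3) ι ℝ) :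
    X ^ 3 * (B * C).charpoly = X ^ Fintype.card ι * (C * B).charpoly := by
  classical
  have key := aux_charpoly_mul_comm
    (fromBlocks (0 : Matrix ι ι ℝ) B 0 (0 : Matrix (Fin 3) (Fin 3) ℝ))
    (fromBlocks (0 : Matrix ι ι ℝ) 0 C 0)
  rw [fromBlocks_multiply, fromBlocks_multiply] at key
  simp only [Matrix.mul_zero, Matrix.zero_mul, add_zero, zero_add] at key
  rw [charpoly_fromBlocks_zero₂₁, charpoly_fromBlocks_zero₂₁] at key
  rw [aux_charpoly_zero, aux_charpoly_zero, Fintype.card_fin] at key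
  rw [mul_comm (X ^ 3)]
  exact key

end Aux

noncomputable def bFac (m n : ℕ) (α : Fin m → ℝ) (β : Fin n → ℝ) :
    Matrix ((Fin m ⊕ Fin n) ⊕ Fin 2) (Fin 3) ℝ :=
  Matrix.of fun u t =>
    match u with
    | .inl (.inl i) => ![α i, 0, 0] t
    | .inl (.inr j) => ![-β j, 0, 0] t
    | .inr s => ![![(0:ℝ),1,0], ![0,0,1]] s t

noncomputable def cFac (m n : ℕ) (k h : ℝ) :
    Matrix (Fin 3) ((Fin m ⊕ Fin n) ⊕ Fin 2) ℝ :=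
  Matrix.of fun s u =>
    match u with
    | .inl (.inl _) => ![(0:ℝ), 1, 0] s
    | .inl (.inr _) => ![(0:ℝ), -1, 0] s
    | .inr t => ![![(0:ℝ),1], ![0,0], ![-k,-h]] s t

def eIdx (m n : ℕ) : ((Fin m ⊕ Fin n) ⊕ Fin 2) ≃ Fin (m + n + 2) :=
  (Equiv.sumCongr finSumFinEquiv (Equiv.refl (Fin 2))).trans finSumFinEquiv

lemma factor_lemma (m n : ℕ) (α : Fin m → ℝ) (β : Fin n → ℝ) (k h : ℝ) :
    Matrix.reindex (eIdx m n).symm (eIdx m n).symm (marketJacobian m n α β k h)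
      = bFac m n α β * cFac m n k h := by
  ext u v
  rw [Matrix.reindex_apply, Matrix.submatrix_apply]
  simp only [Equiv.symm_symm]
  rcases u with (i|j)|s <;> rcases v with (i'|j')|s'
  all_goals try fin_cases s
  all_goals try fin_cases s'
  all_goals simp [marketJacobian, eIdx, bFac, cFac, Matrix.mul_apply, Fin.sum_univ_three,
      Fin.sum_univ_two]
  all_goals try (intro hh; omega)
  all_goals try omega
  all_goals (rw [dif_neg (by omega : ¬ m + n + 1 < m)]; split_ifs <;> first | rfl | omega)

lemma prod_lemma (m n : ℕ) (α : Fin m → ℝ) (β : Fin n → ℝ) (k h : ℝ) :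
    cFac m n k h * bFac m n α β =
      !![0, 0, 1; (∑ i, α i + ∑ j, β j), 0, 0; 0, -k, -h] := by
  ext s t
  fin_cases s <;> fin_cases t <;>
    simp [Matrix.mul_apply, bFac, cFac, Fintype.sum_sum_type, Fin.sum_univ_two]

lemma cube_lemma (S k h : ℝ) :
    (!![0, 0, 1; S, 0, 0; 0, -k, -h] : Matrix (Fin 3) (Fin 3) ℝ).charpoly =
      X ^ 3 + C h * X ^ 2 + C (k * S) := by
  rw [Matrix.charpoly, Matrix.det_fin_three]
  simp [charmatrix_apply, Matrix.diagonal, _root_.map_mul]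
  ring


/-- The characteristic polynomial of the Jacobian J is
λ^{m+n−1}(λ³ + hλ² + k(Σᵢαᵢ + Σⱼβⱼ)); in particular 0 is an eigenvalue of
multiplicity at least m+n−1. -/
theorem market_jacobian_charpoly
    (m n : ℕ) (hmn : 1 ≤ m + n) (α : Fin m → ℝ) (β : Fin n → ℝ) (k h : ℝ) :
    (marketJacobian m n α β k h).charpoly =
      X ^ (m + n - 1) *
        (X ^ 3 + C h * X ^ 2 + C (k * (∑ i, α i + ∑ j, β j))) ∧
    m + n - 1 ≤ (marketJacobian m n α β k h).charpoly.rootMultiplicity 0 := by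
  have hcard : Fintype.card ((Fin m ⊕ Fin n) ⊕ Fin 2) = m + n + 2 := by simp
  have hre : (marketJacobian m n α β k h).charpoly
      = (bFac m n α β * cFac m n k h).charpoly := by
    rw [← factor_lemma, Matrix.charpoly_reindex]
  have key := aux_charpoly_rect (bFac m n α β) (cFac m n k h)
  rw [hcard, prod_lemma, cube_lemma] at key
  have hsplit : m + n + 2 = 3 + (m + n - 1) := by omega
  rw [hsplit, pow_add, mul_assoc] at key
  have hmain : (marketJacobian m n α β k h).charpoly
      = X ^ (m + n - 1) * (X ^ 3 + C h * X ^ 2 + C (k * (∑ i, α i + ∑ j, β j))) := by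
    rw [hre]
    exact mul_left_cancel₀ (pow_ne_zero 3 X_ne_zero) key
  refine ⟨hmain, ?_⟩
  have hne : (marketJacobian m n α β k h).charpoly ≠ 0 :=
    (Matrix.charpoly_monic _).ne_zero
  rw [Polynomial.le_rootMultiplicity_iff hne, hmain]
  simpa using dvd_mul_right (X ^ (m + n - 1))
    (X ^ 3 + C h * X ^ 2 + C (k * (∑ i, α i + ∑ j, β j)))
end
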